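/- Fix H ∈ (0,1) and α, β > 0 with α + β = 1. There exists a constant K > 0 depending only on H and β such that for all a, b, c > 0: |(1/2)((a+b+c)^{2H} + b^{2H} − (a+b)^{2H} − (b+c)^{2H})| ≤ K (ac)^{β(H−1)+1} b^{2α(H−1)}. -/

import Mathlib

/-! The quantity is half the mixed second difference `E = f(a+b+c) + f(b) - f(a+b) - f(b+c)` of
`f x = x ^ 2H`. Two mean value theorems give `E = 2H(2H-1) a c ξ^(2H-2)` with `ξ > b`, hence
`|E| ≤ 2 a c b^(2H-2)`. On the other hand `|E|` is bounded both by a quantity in `a` alone and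
by its mirror image in `c` (`a^2H` and `c^2H` for `H ≤ 1/2`, via subadditivity of `x ^ 2H`;
`2H a c^(2H-1)` and `2H c a^(2H-1)` for `H ≥ 1/2`, via subadditivity of `x ^ (2H-1)`), and the
product of the two bounds gives `|E| ≤ 2 (ac)^H`. The claimed bound is the weighted geometric mean of `|E| ≤ 2 a c b^(2H-2)`
and `|E| ≤ 2 (ac)^H`, which dominates their minimum. -/

open Real Set

def mixedDiff (f : ℝ → ℝ) (a b c : ℝ) : ℝ := f (a + b + c) + f b - f (a + b) - f (b + c)

lemma mixedDiff_comm (f : ℝ → ℝ) (a b c : ℝ) : mixedDiff f a b c = mixedDiff f c b a := by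
  unfold mixedDiff
  ring_nf

lemma min_le_rpow_mul_rpow {x y α β : ℝ} (hx : 0 ≤ x) (hy : 0 ≤ y) (hα : 0 ≤ α) (hβ : 0 ≤ β)
    (hαβ : α + β = 1) : min x y ≤ x ^ α * y ^ β := by
  rcases le_total x y with hxy | hyx
  · calc min x y ≤ x ^ (α + β) := by rw [hαβ, rpow_one]; exact min_le_left x y
      _ = x ^ α * x ^ β := rpow_add' hx (by rw [hαβ]; exact one_ne_zero)
      _ ≤ x ^ α * y ^ β := by gcongr
  · calc min x y ≤ y ^ (α + β) := by rw [hαβ, rpow_one]; exact min_le_right x y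
      _ = y ^ α * y ^ β := rpow_add' hy (by rw [hαβ]; exact one_ne_zero)
      _ ≤ x ^ α * y ^ β := by gcongr

section MeanValue

variable {f f' f'' : ℝ → ℝ} {a b c : ℝ}

lemma exists_mixedDiff_eq_mul_sub_deriv (hf : ∀ x ∈ Ici b, HasDerivAt f (f' x) x)
    (ha : 0 < a) (hc : 0 ≤ c) :
    ∃ ξ ∈ Ioo b (a + b), mixedDiff f a b c = a * (f' (ξ + c) - f' ξ) := by
  have hg : ∀ x ∈ Ici b, HasDerivAt (fun y => f (y + c) - f y) (f' (x + c) - f' x) x :=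
    fun x hx => ((hf (x + c) (by rw [mem_Ici] at hx ⊢; linarith)).comp_add_const x c).sub (hf x hx)
  obtain ⟨ξ, hξ, hslope⟩ := exists_hasDerivAt_eq_slope (fun y => f (y + c) - f y) _
    (by linarith : b < a + b)
    (fun x hx => (hg x hx.1).continuousAt.continuousWithinAt)
    (fun x hx => hg x hx.1.le)
  refine ⟨ξ, hξ, ?_⟩
  rw [hslope, add_sub_cancel_right, mul_div_cancel₀ _ ha.ne', mixedDiff]
  ring_nf

lemma exists_mixedDiff_eq_mul_deriv2 (hf : ∀ x ∈ Ici b, HasDerivAt f (f' x) x)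
    (hf' : ∀ x ∈ Ici b, HasDerivAt f' (f'' x) x) (ha : 0 < a) (hc : 0 < c) :
    ∃ ξ ∈ Ioo b (a + b + c), mixedDiff f a b c = a * c * f'' ξ := by
  obtain ⟨ξ₁, hξ₁, hE⟩ := exists_mixedDiff_eq_mul_sub_deriv hf ha hc.le
  obtain ⟨ξ₂, hξ₂, hslope⟩ := exists_hasDerivAt_eq_slope f' f'' (by linarith : ξ₁ < ξ₁ + c)
    (fun x hx => (hf' x (by simp; linarith [hx.1, hξ₁.1])).continuousAt.continuousWithinAt)
    (fun x hx => hf' x (by simp; linarith [hx.1, hξ₁.1]))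
  refine ⟨ξ₂, ⟨by linarith [hξ₁.1, hξ₂.1], by linarith [hξ₁.2, hξ₂.2]⟩, ?_⟩
  rw [hE, hslope, add_sub_cancel_left, mul_assoc, mul_div_cancel₀ _ hc.ne']

end MeanValue

section Rpow

variable {p a b c : ℝ}

lemma hasDerivAt_rpow_of_pos {x : ℝ} (hx : 0 < x) (p : ℝ) :
    HasDerivAt (fun y => y ^ p) (p * x ^ (p - 1)) x :=
  hasDerivAt_rpow_const (Or.inl hx.ne')

lemma hasDerivAt_mul_rpow_sub_one_of_pos {x : ℝ} (hx : 0 < x) (p : ℝ) :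
    HasDerivAt (fun y => p * y ^ (p - 1)) (p * (p - 1) * x ^ (p - 2)) x := by
  have h := (hasDerivAt_rpow_of_pos hx (p - 1)).const_mul p
  rwa [sub_sub, one_add_one_eq_two, ← mul_assoc] at h

lemma abs_mixedDiff_rpow_le_mul_rpow_sub_two (hp0 : 0 ≤ p) (hp2 : p ≤ 2)
    (ha : 0 < a) (hb : 0 < b) (hc : 0 < c) :
    |mixedDiff (fun x => x ^ p) a b c| ≤ 2 * (a * c) * b ^ (p - 2) := by
  obtain ⟨ξ, hξ, hE⟩ := exists_mixedDiff_eq_mul_deriv2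
    (fun x hx => hasDerivAt_rpow_of_pos (hb.trans_le hx) p)
    (fun x hx => hasDerivAt_mul_rpow_sub_one_of_pos (hb.trans_le hx) p) ha hc
  have hξb : ξ ^ (p - 2) ≤ b ^ (p - 2) := rpow_le_rpow_of_nonpos hb hξ.1.le (by linarith)
  have hcoef : |p * (p - 1)| ≤ 2 := abs_le.mpr ⟨by nlinarith, by nlinarith⟩
  have hξ0 : 0 < ξ := hb.trans hξ.1
  calc |mixedDiff (fun x => x ^ p) a b c| = |p * (p - 1)| * (a * c * ξ ^ (p - 2)) := by
        rw [hE, abs_mul, abs_mul (p * (p - 1)), abs_of_pos (by positivity : 0 < a * c),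
          abs_of_pos (rpow_pos_of_pos hξ0 _)]
        ring
    _ ≤ 2 * (a * c * b ^ (p - 2)) := by gcongr
    _ = 2 * (a * c) * b ^ (p - 2) := by ring

lemma abs_mixedDiff_rpow_le_rpow_of_le_one (hp0 : 0 ≤ p) (hp1 : p ≤ 1)
    (ha : 0 < a) (hb : 0 < b) (hc : 0 < c) :
    |mixedDiff (fun x => x ^ p) a b c| ≤ a ^ p := by
  have h₁ : b ^ p ≤ (a + b) ^ p := rpow_le_rpow hb.le (by linarith) hp0
  have h₂ : (a + b) ^ p ≤ a ^ p + b ^ p := rpow_add_le_add_rpow ha.le hb.le hp0 hp1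
  have h₃ : (b + c) ^ p ≤ (a + b + c) ^ p := rpow_le_rpow (by linarith) (by linarith) hp0
  have h₄ : (a + (b + c)) ^ p ≤ a ^ p + (b + c) ^ p :=
    rpow_add_le_add_rpow ha.le (by linarith) hp0 hp1
  rw [← add_assoc] at h₄
  rw [mixedDiff, abs_le]
  constructor <;> linarith

lemma mixedDiff_rpow_mem_Icc_of_one_le (hp1 : 1 ≤ p) (hp2 : p ≤ 2)
    (ha : 0 < a) (hb : 0 < b) (hc : 0 < c) :
    mixedDiff (fun x => x ^ p) a b c ∈ Icc 0 (p * a * c ^ (p - 1)) := by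
  obtain ⟨ξ, hξ, hE⟩ := exists_mixedDiff_eq_mul_sub_deriv
    (fun x hx => hasDerivAt_rpow_of_pos (hb.trans_le hx) p) ha hc.le
  have hξ0 : 0 < ξ := hb.trans hξ.1
  have hmono : ξ ^ (p - 1) ≤ (ξ + c) ^ (p - 1) := rpow_le_rpow hξ0.le (by linarith) (by linarith)
  have hsub : (ξ + c) ^ (p - 1) ≤ ξ ^ (p - 1) + c ^ (p - 1) :=
    rpow_add_le_add_rpow hξ0.le hc.le (by linarith) (by linarith)
  rw [hE, ← mul_sub, mul_left_comm, mul_assoc]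
  constructor
  · exact mul_nonneg (by linarith) (mul_nonneg ha.le (sub_nonneg.mpr hmono))
  · gcongr
    linarith

lemma le_of_le_of_le_of_mul_le_sq {e x y z : ℝ} (hz : 0 ≤ z) (hx : e ≤ x) (hy : e ≤ y)
    (hxy : x * y ≤ z ^ 2) : e ≤ z := by
  by_contra! h
  nlinarith [mul_le_mul hx hy (hz.trans h.le) ((hz.trans h.le).trans hx)]

lemma abs_mixedDiff_rpow_le_two_mul_rpow (hp0 : 0 ≤ p) (hp2 : p ≤ 2)
    (ha : 0 < a) (hb : 0 < b) (hc : 0 < c) :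
    |mixedDiff (fun x => x ^ p) a b c| ≤ 2 * (a * c) ^ (p / 2) := by
  have hsq : ((a * c) ^ (p / 2)) ^ 2 = a ^ p * c ^ p := by
    rw [← rpow_mul_natCast (by positivity), Nat.cast_ofNat, div_mul_cancel₀ p two_ne_zero,
      mul_rpow ha.le hc.le]
  have hpos : 0 ≤ (a * c) ^ (p / 2) := by positivity
  rcases le_total p 1 with hp1 | hp1
  · have hca := abs_mixedDiff_rpow_le_rpow_of_le_one hp0 hp1 hc hb ha
    rw [← mixedDiff_comm] at hca
    have := le_of_le_of_le_of_mul_le_sq hpos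
      (abs_mixedDiff_rpow_le_rpow_of_le_one hp0 hp1 ha hb hc) hca hsq.ge
    linarith
  · have hac := mixedDiff_rpow_mem_Icc_of_one_le hp1 hp2 ha hb hc
    have hca := mixedDiff_rpow_mem_Icc_of_one_le hp1 hp2 hc hb ha
    rw [← mixedDiff_comm] at hca
    rw [abs_of_nonneg hac.1]
    refine le_of_le_of_le_of_mul_le_sq (by positivity) hac.2 hca.2 ?_
    have ha' : a * a ^ (p - 1) = a ^ p := by rw [rpow_sub_one ha.ne']; field_simp
    have hc' : c * c ^ (p - 1) = c ^ p := by rw [rpow_sub_one hc.ne']; field_simp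
    calc p * a * c ^ (p - 1) * (p * c * a ^ (p - 1))
        = p ^ 2 * (a * a ^ (p - 1) * (c * c ^ (p - 1))) := by ring
      _ ≤ 2 ^ 2 * (a ^ p * c ^ p) := by rw [ha', hc']; gcongr
      _ = (2 * (a * c) ^ (p / 2)) ^ 2 := by rw [mul_pow, hsq]

end Rpow

/-- The covariance bound in Case (iii): for `H ∈ (0,1)` and `α, β > 0` with `α + β = 1`,
there is a constant `K > 0` such that for all `a, b, c > 0`,
`|(1/2)((a+b+c)^{2H} + b^{2H} − (a+b)^{2H} − (b+c)^{2H})| ≤ K (ac)^{β(H−1)+1} b^{2α(H−1)}`. -/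
theorem mu_bound_case3 (H : ℝ) (hH0 : 0 < H) (hH1 : H < 1)
    (α β : ℝ) (hα : 0 < α) (hβ : 0 < β) (hαβ : α + β = 1) :
    ∃ K : ℝ, 0 < K ∧ ∀ a b c : ℝ, 0 < a → 0 < b → 0 < c →
      |(1 / 2) * ((a + b + c) ^ (2 * H) + b ^ (2 * H)
          - (a + b) ^ (2 * H) - (b + c) ^ (2 * H))|
        ≤ K * (a * c) ^ (β * (H - 1) + 1) * b ^ (2 * α * (H - 1)) := by
  refine ⟨1, one_pos, fun a b c ha hb hc => ?_⟩
  have hac : 0 < a * c := mul_pos ha hc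
  have hp0 : 0 ≤ 2 * H := by linarith
  have hp2 : 2 * H ≤ 2 := by linarith
  have hE₁ := abs_mixedDiff_rpow_le_mul_rpow_sub_two hp0 hp2 ha hb hc
  have hE₂ := abs_mixedDiff_rpow_le_two_mul_rpow hp0 hp2 ha hb hc
  rw [mul_div_cancel_left₀ H two_ne_zero] at hE₂
  have hinterp := min_le_rpow_mul_rpow (mul_pos hac (rpow_pos_of_pos hb (2 * H - 2))).le
    (rpow_nonneg hac.le H) hα.le hβ.le hαβ
  have hexp : (a * c * b ^ (2 * H - 2)) ^ α * ((a * c) ^ H) ^ β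
      = (a * c) ^ (β * (H - 1) + 1) * b ^ (2 * α * (H - 1)) := by
    rw [mul_rpow hac.le (rpow_nonneg hb.le _), ← rpow_mul hb.le, ← rpow_mul hac.le,
      mul_right_comm, ← rpow_add hac]
    congr 2
    · linear_combination hαβ
    · ring
  calc |1 / 2 * mixedDiff (fun x => x ^ (2 * H)) a b c|
      ≤ min (a * c * b ^ (2 * H - 2)) ((a * c) ^ H) := by
        rw [abs_mul, abs_of_pos one_half_pos, le_min_iff]
        constructor <;> linarith
    _ ≤ 1 * (a * c) ^ (β * (H - 1) + 1) * b ^ (2 * α * (H - 1)) := by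
        rw [one_mul, ← hexp]; exact hinterp
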